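/- In the TRS with the single collapsing rule f(x,y) → x, the infinite term s defined corecursively by s = f(f(s,b),a) admits strongly convergent reductions of length ω to both t₁ = f(t₁,a) and t₂ = f(t₂,b), and t₁, t₂ have no common reduct; hence this orthogonal TRS is not infinitarily confluent. -/

import Mathlib

/-- The signature: a binary symbol `f` and constants `a`, `b`. -/
inductive FabSym : Type
  | f | a | b
deriving DecidableEq

/-- Possibly infinite terms over {f, a, b}, represented as assignments of
symbols to binary positions (`false` = first/left argument, `true` =
second/right argument); positions below a constant carry the dummy value
`FabSym.a` (see `WFTm`). -/
def Tm : Type := List Bool → FabSym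

/-- Well-formedness: below a non-`f` symbol all positions carry the canonical
filler `FabSym.a`. -/
def WFTm (t : Tm) : Prop := ∀ p c, t p ≠ FabSym.f → t (p ++ [c]) = FabSym.a

/-- `p` is a reachable (meaningful) position of `t`: all proper prefixes of
`p` carry the binary symbol `f`. -/
def ReachPos (t : Tm) (p : List Bool) : Prop :=
  ∀ q, q <+: p → q ≠ p → t q = FabSym.f

/-- The symbol `x` occurs in `t` (at a reachable position). -/
def OccursIn (t : Tm) (x : FabSym) : Prop := ∃ p, ReachPos t p ∧ t p = x

/-- A rewrite step with the collapsing rule `f(x,y) → x` at position `p`: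
the subterm at `p` has root `f` and is replaced by its first argument. -/
def stepAtT (p : List Bool) (t t' : Tm) : Prop :=
  t p = FabSym.f ∧
    ∀ q, t' q = if p <+: q then t (p ++ false :: q.drop p.length) else t q

/-- A step at depth at least `d`. -/
def stepTGe (d : ℕ) (t t' : Tm) : Prop :=
  ∃ p : List Bool, d ≤ p.length ∧ stepAtT p t t'

/-- `sconvT t s`: there is a strongly convergent reduction of length `≤ ω`
from `t` to `s`: stages `g n` starting at `t`, all steps from stage `n` on
are at depth `≥ n` (so depths tend to infinity), and stage `n` agrees with
the limit `s` below depth `n`. -/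
def sconvT (t s : Tm) : Prop :=
  ∃ g : ℕ → Tm, g 0 = t ∧
    (∀ n, Relation.ReflTransGen (stepTGe n) (g n) (g (n + 1))) ∧
    (∀ n q, q.length < n → g n q = s q)

/-- The infinite term with spine `f(f(f(…,c 2),c 1),c 0)` written inside-out:
all-left positions carry `f`, and the right argument at spine depth `k` is
the constant `c k`. -/
def spineTm (c : ℕ → FabSym) : Tm := fun p =>
  let k := (p.takeWhile fun x => !x).length
  let r := p.drop k
  if r = [] then FabSym.f else if r = [true] then c k else FabSym.a

/-- `s = f(f(s,b),a)`. -/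
def sTerm : Tm := spineTm fun k => if k % 2 = 0 then FabSym.a else FabSym.b

/-- `t₁ = f(t₁,a)`. -/
def t1Term : Tm := spineTm fun _ => FabSym.a

/-- `t₂ = f(t₂,b)`. -/
def t2Term : Tm := spineTm fun _ => FabSym.b

/-!
Contracting the redex at the spine position of depth `j` of a spine term `f(f(…,c 1),c 0)`
deletes its `j`-th argument. In `s` the arguments alternate `a, b, a, b, …`; deleting at stage `n`
the first argument at depth `≥ n` that disagrees with the target constant fixes the first `n`
arguments, so these reductions converge to `t₁` and to `t₂`. Conversely, deleting an argument of a
constant spine changes nothing, so every step from `t₁` (or `t₂`) returns the same term; hence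
their only reducts are themselves, and they differ at position `[true]`.
-/

def eraseAt (j : ℕ) (c : ℕ → FabSym) : ℕ → FabSym := fun k => if k < j then c k else c (k + 1)

lemma eraseAt_zero (c : ℕ → FabSym) : eraseAt 0 c = fun k => c (k + 1) := rfl

lemma eraseAt_succ (j : ℕ) (c : ℕ → FabSym) :
    (fun k => eraseAt (j + 1) c (k + 1)) = eraseAt j fun k => c (k + 1) := by
  funext k
  simp only [eraseAt, Nat.add_lt_add_iff_right]

lemma eraseAt_const (j : ℕ) (x : FabSym) : eraseAt j (fun _ => x) = fun _ => x := by
  funext k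
  exact ite_self x

section spineTm

variable (c : ℕ → FabSym)

@[simp]
lemma spineTm_nil : spineTm c [] = FabSym.f := rfl

@[simp]
lemma spineTm_false_cons (q : List Bool) :
    spineTm c (false :: q) = spineTm (fun k => c (k + 1)) q := by
  simp [spineTm]

@[simp]
lemma spineTm_true_cons (q : List Bool) :
    spineTm c (true :: q) = if q = [] then c 0 else FabSym.a := by
  simp [spineTm]

@[simp]
lemma spineTm_replicate_false (j : ℕ) : spineTm c (List.replicate j false) = FabSym.f := by
  induction j generalizing c with
  | zero => rfl
  | succ j ih => simp [List.replicate_succ, ih]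

lemma spineTm_congr {c' : ℕ → FabSym} {q : List Bool}
    (h : ∀ k, q = List.replicate k false ++ [true] → c k = c' k) :
    spineTm c q = spineTm c' q := by
  induction q generalizing c c' with
  | nil => rfl
  | cons x q ih =>
    cases x
    · simp only [spineTm_false_cons]
      exact ih _ fun k hk => h (k + 1) (by simp [hk, List.replicate_succ])
    · simp only [spineTm_true_cons]
      split_ifs with hq
      · exact h 0 (by simp [hq])
      · rfl

lemma spineTm_eq_of_length_lt {c' : ℕ → FabSym} {n : ℕ} (h : ∀ k < n, c k = c' k)
    {q : List Bool} (hq : q.length < n) : spineTm c q = spineTm c' q :=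
  spineTm_congr c fun k hk => h k (by simp [hk] at hq; omega)

lemma eq_replicate_of_spineTm_eq_f (hc : ∀ k, c k ≠ FabSym.f) {p : List Bool}
    (h : spineTm c p = FabSym.f) : p = List.replicate p.length false := by
  induction p generalizing c with
  | nil => rfl
  | cons x p ih =>
    cases x
    · simp only [spineTm_false_cons] at h
      simpa [List.replicate_succ] using ih _ (fun k => hc (k + 1)) h
    · simp only [spineTm_true_cons] at h
      split_ifs at h
      exact absurd h (hc 0)

lemma spineTm_eraseAt (j : ℕ) (q : List Bool) :
    spineTm (eraseAt j c) q =
      if List.replicate j false <+: q then spineTm c (List.replicate j false ++ false :: q.drop j)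
      else spineTm c q := by
  induction j generalizing c q with
  | zero => simp [eraseAt_zero]
  | succ j ih =>
    match q with
    | [] => simp
    | true :: q => simp [List.replicate_succ, eraseAt]
    | false :: q =>
      simp only [spineTm_false_cons, eraseAt_succ, ih]
      simp [List.replicate_succ]

lemma stepAtT_spineTm_eraseAt (j : ℕ) :
    stepAtT (List.replicate j false) (spineTm c) (spineTm (eraseAt j c)) :=
  ⟨spineTm_replicate_false c j, fun q => by simpa using spineTm_eraseAt c j q⟩

end spineTm

lemma stepAtT_right_unique {p : List Bool} {t t₁ t₂ : Tm} (h₁ : stepAtT p t t₁)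
    (h₂ : stepAtT p t t₂) : t₁ = t₂ :=
  funext fun q => (h₁.2 q).trans (h₂.2 q).symm

theorem sconvT_spineTm_of_eraseAt {c : ℕ → ℕ → FabSym} {d : ℕ → FabSym}
    (hstep : ∀ n, ∃ j, n ≤ j ∧ c (n + 1) = eraseAt j (c n))
    (hlim : ∀ n, ∀ k < n, c n k = d k) :
    sconvT (spineTm (c 0)) (spineTm d) := by
  refine ⟨fun n => spineTm (c n), rfl, fun n => ?_, fun n q hq => ?_⟩
  · obtain ⟨j, hnj, hc⟩ := hstep n
    refine .single ⟨List.replicate j false, by simpa using hnj, ?_⟩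
    dsimp only
    rw [hc]
    exact stepAtT_spineTm_eraseAt (c n) j
  · exact spineTm_eq_of_length_lt (c n) (hlim n) hq

lemma eq_of_sconvT_of_forall_stepTGe {t u : Tm} (hfix : ∀ d t', stepTGe d t t' → t' = t)
    (h : sconvT t u) : u = t := by
  obtain ⟨g, hg0, hstep, hlim⟩ := h
  have hstage : ∀ n, g n = t := by
    intro n
    induction n with
    | zero => exact hg0
    | succ n ih =>
      have h := hstep n
      rw [ih] at h
      generalize g (n + 1) = t' at h ⊢
      induction h with
      | refl => rfl
      | tail _ hst ih' => exact hfix n _ (ih' ▸ hst)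
  funext q
  rw [← hlim (q.length + 1) q q.length.lt_succ_self, hstage]

lemma eq_of_sconvT_spineTm_const {x : FabSym} (hx : x ≠ FabSym.f) {u : Tm}
    (h : sconvT (spineTm fun _ => x) u) : u = spineTm fun _ => x := by
  refine eq_of_sconvT_of_forall_stepTGe (fun d t' ⟨p, _, hp⟩ => ?_) h
  have hrep := eq_replicate_of_spineTm_eq_f _ (fun _ => hx) hp.1
  have hconst := stepAtT_spineTm_eraseAt (fun _ => x) p.length
  rw [eraseAt_const, ← hrep] at hconst
  exact stepAtT_right_unique hp hconst

/-- `sTerm` is `spineTm altAB` definitionally. -/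
def altAB (k : ℕ) : FabSym := if k % 2 = 0 then FabSym.a else FabSym.b

/-- Stage `n` of the reductions from `s`; its tail is the argument sequence of `s` from index `2n`
on. -/
def prefixThenAlt (x : FabSym) (n k : ℕ) : FabSym := if k < n then x else altAB (k + n)

lemma prefixThenAlt_zero (x : FabSym) : prefixThenAlt x 0 = altAB := by
  funext k
  simp [prefixThenAlt]

lemma sconvT_sTerm_of_eraseAt {x : FabSym}
    (hstep : ∀ n, ∃ j, n ≤ j ∧ prefixThenAlt x (n + 1) = eraseAt j (prefixThenAlt x n)) :
    sconvT sTerm (spineTm fun _ => x) := by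
  have := sconvT_spineTm_of_eraseAt hstep fun n k hk => if_pos hk
  rwa [prefixThenAlt_zero] at this

theorem sconvT_sTerm_t1Term : sconvT sTerm t1Term := by
  refine sconvT_sTerm_of_eraseAt fun n => ⟨n + 1, n.le_succ, ?_⟩
  funext k
  simp only [eraseAt, prefixThenAlt, altAB]
  split_ifs <;> first | rfl | omega

theorem sconvT_sTerm_t2Term : sconvT sTerm t2Term := by
  refine sconvT_sTerm_of_eraseAt fun n => ⟨n, le_refl n, ?_⟩
  funext k
  simp only [eraseAt, prefixThenAlt, altAB]
  split_ifs <;> first | rfl | omega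

/-- in the TRS with the single collapsing rule `f(x,y) → x`, the
term `s = f(f(s,b),a)` rewrites by strongly convergent reductions to both
`t₁ = f(t₁,a)` and `t₂ = f(t₂,b)`, and `t₁`, `t₂` have no common reduct; so
this orthogonal TRS is not infinitarily confluent. -/
theorem statement12 :
    sconvT sTerm t1Term ∧ sconvT sTerm t2Term ∧
      ¬ ∃ u : Tm, sconvT t1Term u ∧ sconvT t2Term u := by
  refine ⟨sconvT_sTerm_t1Term, sconvT_sTerm_t2Term, ?_⟩
  rintro ⟨u, h₁, h₂⟩
  have h₁₂ : t1Term [true] = t2Term [true] := by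
    rw [t1Term, t2Term, ← eq_of_sconvT_spineTm_const (by decide) h₁,
      ← eq_of_sconvT_spineTm_const (by decide) h₂]
  simp [t1Term, t2Term] at h₁₂
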